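/- arXiv:1308.2979 — 2 statements merged into one kernel-verified Lean document; each statement's English description precedes it below -/
import Mathlib

section
/- In the barrier-free POabcast algorithm, a process delivers each broadcast value in at most one consensus instance, even though the primary may re-propose the same value in multiple instances: if a primary resends a value only when that value was not delivered at the instance where it was previously proposed, then each value is delivered at most once. -/
/-- A value is delivered in at most one consensus instance, even if re-proposed:
delivery only happens at instances where v's proposal is outstanding, and the
primary re-proposes v at a later instance only if the earlier instance did not
result in delivery of v. -/
theorem stmt5
    (proposedAt : ℕ → Prop)   -- instances in which v is (re-)proposed by the primary
    (delAt : ℕ → Prop)        -- instances at which the process delivers v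
    (hDelProp : ∀ n, delAt n → proposedAt n)
    (hResend : ∀ n n', proposedAt n → proposedAt n' → n < n' → ¬ delAt n) :
    ∀ n n', delAt n → delAt n' → n = n' := by
  have not_lt_of_delAt : ∀ n n', delAt n → delAt n' → ¬ n < n' := fun n n' hn hn' hlt =>
    hResend n n' (hDelProp n hn) (hDelProp n' hn') hlt hn
  intro n n' hn hn'
  exact le_antisymm (not_lt.mp (not_lt_of_delAt n' n hn' hn))
    (not_lt.mp (not_lt_of_delAt n n' hn hn'))
end

section
/- Linearizability mapping lemma (abstracted from Theorem 4): suppose all processes deliver state updates in a common total order ≺_Δ, each delivered update δ at position i satisfies (i) no update at a position < i was generated from the same operation, and (ii) src(δ) equals the state reached by applying the updates at positions < i starting from the common initial state Σ₀. Then the map from delivered updates to operations is injective, the fold of the delivered sequence from Σ₀ never reaches ⊥, and every prefix of the delivered sequence yields a state reachable by executing the corresponding operation sequence. -/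
structure Upd (S : Type) where
  src : S
  tgt : S

def applyU {S : Type} [DecidableEq S] (δ : Upd S) : Option S → Option S
  | none => none
  | some x => if x = δ.src then some δ.tgt else none

def foldApply {S : Type} [DecidableEq S] (l : List (Upd S)) (S0 : S) : Option S :=
  l.foldl (fun s δ => applyU δ s) (some S0)

section Chain

variable {S : Type} [DecidableEq S]

theorem applyU_some_src (d : Upd S) : applyU d (some d.src) = some d.tgt := by
  simp [applyU]

theorem foldApply_append_singleton (l : List (Upd S)) (d : Upd S) (S0 : S) :
    foldApply (l ++ [d]) S0 = applyU d (foldApply l S0) := by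
  simp only [foldApply, List.foldl_append, List.foldl_cons, List.foldl_nil]

theorem foldApply_range_of_chain (δ : ℕ → Upd S) (s : ℕ → S)
    (hsrc : ∀ k, (δ k).src = s k) (htgt : ∀ k, (δ k).tgt = s (k + 1)) (n : ℕ) :
    foldApply ((List.range n).map δ) (s 0) = some (s n) := by
  induction n with
  | zero => rfl
  | succ n ih =>
    rw [List.range_succ, List.map_append, List.map_singleton, foldApply_append_singleton, ih,
      ← hsrc, applyU_some_src, htgt]

end Chain

/-- Linearizability mapping lemma: given a common delivery order of updates δ₀, δ₁, …
with (i) distinct generating operations and (ii) each update generated from the state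
reached by the preceding prefix, the map to operations is injective, every prefix
fold from S0 avoids ⊥ and yields the target of the last update, and every prefix
corresponds to a legal sequential execution S0 —op₀→ … —op_{n-1}→. -/
theorem stmt16
    (S O : Type) [DecidableEq S]
    (exec : S → O → Upd S → Prop)        -- execution relation S —op→ δ
    (S0 : S)
    (δ : ℕ → Upd S) (opOf : ℕ → O)
    (stateAfter : ℕ → S)
    (hSA0 : stateAfter 0 = S0)
    (hSAs : ∀ k, stateAfter (k + 1) = (δ k).tgt)
    (hOps : ∀ i j, i ≠ j → opOf i ≠ opOf j)        -- (i)
    (hSrc : ∀ k, (δ k).src = stateAfter k)          -- (ii)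
    (hExec : ∀ k, exec ((δ k).src) (opOf k) (δ k))  -- δ_k generated by executing op_k
    : Function.Injective opOf ∧
      (∀ n, foldApply ((List.range n).map δ) S0 = some (stateAfter n)) ∧
      (∀ n, ∃ run : ℕ → S, run 0 = S0 ∧
        ∀ k < n, exec (run k) (opOf k) (δ k) ∧ run (k + 1) = (δ k).tgt) := by
  refine ⟨Function.injective_iff_pairwise_ne.mpr hOps, fun n => ?_, fun _ => ?_⟩
  · subst hSA0
    exact foldApply_range_of_chain δ stateAfter hSrc (fun k => (hSAs k).symm) n
  · exact ⟨stateAfter, hSA0, fun k _ => ⟨hSrc k ▸ hExec k, hSAs k⟩⟩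
end
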